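/- arXiv:0710.2571 — 4 statements merged into one kernel-verified Lean document; each statement's English description precedes it below -/
import Mathlib

section
/- Let (Λ, 𝒢) be a labeled-graph in which every vertex group is a directly-indecomposable cyclic group, and let x be a CP element of W(Λ, 𝒢). Then the centralizer of x in W(Λ, 𝒢) equals W(star(x)). -/
open Monoid

open scoped commutatorElement

section GraphProduct

variable {V : Type} (Γ : SimpleGraph V) (G : V → Type) [∀ v, Group (G v)]

/-- The relations of the graph product: the normal closure of the commutators
`[g, h]` with `g ∈ G u`, `h ∈ G v` and `u, v` adjacent. -/
def gpRel : Subgroup (CoprodI G) :=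
  Subgroup.normalClosure
    {x | ∃ (u v : V) (g : G u) (h : G v), Γ.Adj u v ∧ x = ⁅CoprodI.of g, CoprodI.of h⁆}

instance : (gpRel Γ G).Normal := Subgroup.normalClosure_normal

/-- The graph product of the family of groups `G` over the graph `Γ`. -/
def GP := CoprodI G ⧸ gpRel Γ G

instance : Group (GP Γ G) := QuotientGroup.Quotient.group _

/-- The canonical map from a vertex group into the graph product. -/
def GP.of (v : V) : G v →* GP Γ G := (QuotientGroup.mk' (gpRel Γ G)).comp CoprodI.of

/-- The subgroup `W(U)` of the graph product generated by the images of the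
vertex groups `G u`, `u ∈ U`. -/
def WS (U : Set V) : Subgroup (GP Γ G) := ⨆ u ∈ U, (GP.of Γ G u).range

/-- The support of an element: the smallest vertex set `S` with `g ∈ W(S)`. -/
def supp (g : GP Γ G) : Set V := ⋂₀ {S : Set V | g ∈ WS Γ G S}

/-- The cyclic support of an element. -/
def supc (g : GP Γ G) : Set V := {u | ∀ w : GP Γ G, u ∈ supp Γ G (w * g * w⁻¹)}

end GraphProduct

/-- A group is directly-indecomposable cyclic if it is infinite cyclic or
cyclic of prime-power order. -/
def DICyclic (G : Type) [Group G] : Prop :=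
  IsCyclic G ∧ (Infinite G ∨ ∃ p n : ℕ, p.Prime ∧ Nat.card G = p ^ n)

/-- Word length with respect to a set `S` of generators. -/
noncomputable def wordLength {G : Type} [Group G] (S : Set G) (g : G) : ℕ :=
  sInf {n | ∃ l : List G, (∀ a ∈ l, a ∈ S) ∧ l.length = n ∧ l.prod = g}

/-- The equivalence relation: `u ∼ v` iff `u` and `v` lie in exactly the same
maximal cliques. -/
def simSetoid {V : Type} (Λ : SimpleGraph V) : Setoid V :=
  ⟨fun u v => ∀ s : Set V, Maximal Λ.IsClique s → (u ∈ s ↔ v ∈ s),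
   ⟨fun _ _ _ => Iff.rfl, fun h s hs => (h s hs).symm, fun h h' s hs => (h s hs).trans (h' s hs)⟩⟩

/-- The `T₀`-quotient graph. -/
def T0Q {V : Type} (Λ : SimpleGraph V) : SimpleGraph (Quotient (simSetoid Λ)) where
  Adj a b := a ≠ b ∧ ∃ u v : V,
    Quotient.mk (simSetoid Λ) u = a ∧ Quotient.mk (simSetoid Λ) v = b ∧ Λ.Adj u v
  symm := ⟨by rintro a b ⟨hne, u, v, hu, hv, h⟩; exact ⟨hne.symm, v, u, hv, hu, h.symm⟩⟩
  loopless := ⟨by rintro a ⟨hne, -⟩; exact hne rfl⟩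

/-- The vertex group of the `T₀`-quotient at a class `a`: the direct product
of the vertex groups over the class. -/
def classGroup {V : Type} (Λ : SimpleGraph V) (G : V → Type) [∀ v, Group (G v)]
    (a : Quotient (simSetoid Λ)) : Type :=
  ∀ v : {v : V // Quotient.mk (simSetoid Λ) v = a}, G v.1

instance {V : Type} (Λ : SimpleGraph V) (G : V → Type) [∀ v, Group (G v)]
    (a : Quotient (simSetoid Λ)) : Group (classGroup Λ G a) :=
  inferInstanceAs (Group (∀ v : {v : V // Quotient.mk (simSetoid Λ) v = a}, G v.1))

/-!
Splitting `W = W(Λ, 𝒢)` at a vertex `v` exhibits it as the amalgamated product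
`W(V ∖ {v}) *_{W(lk v)} (W(lk v) × G v)`. If `v ∉ star(x)`, then `x ∈ W(V ∖ {v})` and some
`u ∈ supp x` is not adjacent to `v`. No conjugate of `x` lies in `W(lk v)`: splitting at `u`
instead, `x` lies in `W(lk u) × G u` with nontrivial `G u`-coordinate, so none of its conjugates
lies in the other factor `W(V ∖ {u})`. The conjugacy theorem for amalgamated products then
forces every element centralizing `x` into `W(V ∖ {v})`, and intersecting over all such `v`
gives `W(star x)`. Conversely `W(star x)` centralizes `x` because `supp x` is a clique, every
vertex of `star x` outside it is adjacent to all of it, and the vertex groups are abelian.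
-/

namespace Monoid.PushoutI

variable {ι : Type*} {K : ι → Type*} [∀ i, Group (K i)] {H : Type*} [Group H]
  {φ : ∀ i, H →* K i}

variable (φ) in
def listProd (l : List (Σ i, K i)) : PushoutI φ :=
  (l.map fun a => of a.1 a.2).prod

variable (φ) in
def IsReducedList (l : List (Σ i, K i)) : Prop :=
  (∀ a ∈ l, a.2 ∉ (φ a.1).range) ∧ l.IsChain fun a b => a.1 ≠ b.1

@[simp]
theorem listProd_nil : listProd φ ([] : List (Σ i, K i)) = 1 := rfl

@[simp]
theorem listProd_cons (a : Σ i, K i) (l : List (Σ i, K i)) :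
    listProd φ (a :: l) = of a.1 a.2 * listProd φ l := by
  simp [listProd]

@[simp]
theorem listProd_append (l₁ l₂ : List (Σ i, K i)) :
    listProd φ (l₁ ++ l₂) = listProd φ l₁ * listProd φ l₂ := by
  simp [listProd]

def invRev (l : List (Σ i, K i)) : List (Σ i, K i) :=
  (l.map fun a => ⟨a.1, a.2⁻¹⟩).reverse

theorem invRev_append_singleton (l : List (Σ i, K i)) (a : Σ i, K i) :
    invRev (l ++ [a]) = ⟨a.1, a.2⁻¹⟩ :: invRev l := by
  simp [invRev]

theorem listProd_invRev (l : List (Σ i, K i)) : listProd φ (invRev l) = (listProd φ l)⁻¹ := by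
  induction l using List.reverseRecOn with
  | nil => simp [invRev]
  | append_singleton l a ih => simp [invRev_append_singleton, ih]

theorem IsReducedList.invRev {l : List (Σ i, K i)} (hl : IsReducedList φ l) :
    IsReducedList φ (invRev l) := by
  refine ⟨fun a ha => ?_, ?_⟩
  · obtain ⟨b, hb, rfl⟩ := List.mem_map.1 (List.mem_reverse.1 ha)
    simpa using hl.1 b hb
  · rw [PushoutI.invRev, List.isChain_reverse, List.isChain_map]
    exact hl.2.imp fun _ _ h => h.symm

theorem IsReducedList.tail {a : Σ i, K i} {l : List (Σ i, K i)}
    (hl : IsReducedList φ (a :: l)) : IsReducedList φ l :=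
  ⟨fun b hb => hl.1 b (List.mem_cons_of_mem a hb), hl.2.tail⟩

theorem IsReducedList.listProd_notMem_range_base (hφ : ∀ i, Function.Injective (φ i))
    {l : List (Σ i, K i)} (hl : IsReducedList φ l) (hne : l ≠ []) :
    listProd φ l ∉ (base φ).range := by
  intro hmem
  let w : CoprodI.Word K :=
    ⟨l, fun a ha h1 => hl.1 a ha (h1 ▸ one_mem _), hl.2⟩
  have hprod : ofCoprodI w.prod = listProd φ l := by
    simp [w, CoprodI.Word.prod, listProd, map_list_prod, Function.comp_def]
  have := Reduced.eq_empty_of_mem_range hφ (w := w) hl.1 (hprod ▸ hmem)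
  exact hne (congr_arg CoprodI.Word.toList this)

theorem of_mem_range_base_iff (hφ : ∀ i, Function.Injective (φ i)) {i : ι} {z : K i} :
    of (φ := φ) i z ∈ (base φ).range ↔ z ∈ (φ i).range := by
  constructor
  · rintro ⟨h, hh⟩
    exact ⟨h, of_injective hφ i (by rw [of_apply_eq_base, hh])⟩
  · rintro ⟨h, rfl⟩
    exact ⟨h, (of_apply_eq_base φ i h).symm⟩

theorem IsReducedList.listProd_notMem_range_of (hφ : ∀ i, Function.Injective (φ i))
    {l : List (Σ i, K i)} (hl : IsReducedList φ l) (hlen : 2 ≤ l.length) (i : ι) :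
    listProd φ l ∉ (of (φ := φ) i).range := by
  -- Prepending the letter `a⁻¹` (merged into the first letter if its index is `i`) would give a
  -- nonempty reduced word with product `1`.
  rintro ⟨a, ha⟩
  obtain _ | ⟨⟨i₁, g₁⟩, l⟩ := l
  · simp at hlen
  have hl_ne : l ≠ [] := by rintro rfl; simp at hlen
  rcases eq_or_ne i i₁ with rfl | hi
  · have hrest : listProd φ l = of i (g₁⁻¹ * a) := by
      rw [map_mul, ha, listProd_cons, map_inv]; group
    by_cases hc : g₁⁻¹ * a ∈ (φ i).range
    · exact hl.tail.listProd_notMem_range_base hφ hl_ne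
        (hrest ▸ (of_mem_range_base_iff hφ).2 hc)
    · have hred : IsReducedList φ (⟨i, a⁻¹ * g₁⟩ :: l) := by
        refine ⟨?_, List.isChain_cons.2 ⟨(List.isChain_cons.1 hl.2).1, hl.tail.2⟩⟩
        intro b hb
        rcases List.mem_cons.1 hb with rfl | hb
        · exact fun h => hc (by simpa using inv_mem h)
        · exact hl.1 b (List.mem_cons_of_mem _ hb)
      refine hred.listProd_notMem_range_base hφ (List.cons_ne_nil _ _) ⟨1, ?_⟩
      simp [hrest, ← map_mul, mul_assoc]
  · have ha_nr : a ∉ (φ i).range := fun ⟨h, hh⟩ =>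
      hl.listProd_notMem_range_base hφ (List.cons_ne_nil _ _)
        ⟨h, by rw [← ha, ← hh, of_apply_eq_base]⟩
    have hred : IsReducedList φ (⟨i, a⁻¹⟩ :: ⟨i₁, g₁⟩ :: l) := by
      refine ⟨?_, List.isChain_cons_cons.2 ⟨hi, hl.2⟩⟩
      intro b hb
      rcases List.mem_cons.1 hb with rfl | hb
      · exact fun h => ha_nr (by simpa using inv_mem h)
      · exact hl.1 b hb
    refine hred.listProd_notMem_range_base hφ (List.cons_ne_nil _ _) ⟨1, ?_⟩
    rw [listProd_cons, ← ha, map_inv, map_one, inv_mul_cancel]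

theorem IsReducedList.append_cons_invRev {l : List (Σ i, K i)} {k j : ι} {g : K k} {x : K j}
    (hl : IsReducedList φ (l ++ [⟨k, g⟩])) (hx : x ∉ (φ j).range) (hkj : k ≠ j) :
    IsReducedList φ
      ((l ++ [⟨k, g⟩]) ++ ⟨j, x⟩ :: PushoutI.invRev (l ++ [⟨k, g⟩])) := by
  refine ⟨fun a ha => ?_, List.isChain_append.2 ⟨hl.2, ?_, ?_⟩⟩
  · rcases List.mem_append.1 ha with ha | ha
    · exact hl.1 a ha
    rcases List.mem_cons.1 ha with rfl | ha
    · exact hx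
    · exact hl.invRev.1 a ha
  · rw [invRev_append_singleton, List.isChain_cons]
    refine ⟨fun b hb => ?_, by simpa [invRev_append_singleton] using hl.invRev.2⟩
    obtain rfl := Option.mem_some_iff.1 hb
    exact hkj.symm
  · intro a ha b hb
    obtain rfl : a = ⟨k, g⟩ := by simpa using ha.symm
    obtain rfl := Option.mem_some_iff.1 hb
    exact hkj

theorem IsReducedList.listProd_mem_range_of_conj (hφ : ∀ i, Function.Injective (φ i))
    {l : List (Σ i, K i)} (hl : IsReducedList φ l) {j : ι} {x : K j}
    (hx : ∀ c : K j, c * x * c⁻¹ ∉ (φ j).range) {i : ι}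
    (h : listProd φ l * of j x * (listProd φ l)⁻¹ ∈ (of (φ := φ) i).range) :
    listProd φ l ∈ (of (φ := φ) j).range := by
  induction l using List.reverseRecOn generalizing j with
  | nil => exact one_mem _
  | append_singleton l a ih =>
    obtain ⟨k, g⟩ := a
    have hl' : IsReducedList φ l :=
      ⟨fun b hb => hl.1 b (List.mem_append_left _ hb), (List.isChain_append.1 hl.2).1⟩
    rcases eq_or_ne k j with rfl | hkj
    · -- The last letter lies in `K j`, so it can be absorbed into `x`.
      have hx' : ∀ c : K k, c * (g * x * g⁻¹) * c⁻¹ ∉ (φ k).range := fun c => by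
        simpa [mul_assoc] using hx (c * g)
      have h' : listProd φ l * of k (g * x * g⁻¹) * (listProd φ l)⁻¹ ∈
          (of (φ := φ) i).range := by
        simpa [mul_assoc] using h
      simpa using mul_mem (ih hl' hx' h') ⟨g, rfl⟩
    · -- Otherwise `l x l⁻¹` is itself a reduced word of length at least two.
      refine absurd ?_ ((hl.append_cons_invRev (by simpa using hx 1) hkj).listProd_notMem_range_of
        hφ (by simp only [List.length_append, List.length_cons]; omega) i)
      simpa [listProd_invRev, mul_assoc] using h

theorem exists_eq_base_mul_listProd (hφ : ∀ i, Function.Injective (φ i)) (g : PushoutI φ) :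
    ∃ (h : H) (l : List (Σ i, K i)), IsReducedList φ l ∧ g = base φ h * listProd φ l := by
  classical
  obtain ⟨d⟩ := NormalWord.transversal_nonempty φ hφ
  let w : NormalWord d := g • NormalWord.empty
  refine ⟨w.head, w.toList, ⟨fun a ha hr => w.ne_one a ha ?_, w.chain_ne⟩, ?_⟩
  · -- A letter lying both in the transversal and in the image of `φ` is `1`.
    have h₁ := (d.compl a.1).equiv_fst_eq_self_of_mem_of_one_mem (d.one_mem a.1) hr
    have h₂ := (d.compl a.1).equiv_fst_eq_one_of_mem_of_one_mem (one_mem _) (w.normalized _ _ ha)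
    exact congr_arg Subtype.val (h₁.symm.trans h₂)
  · have hw : w.prod = g := by simp [w, NormalWord.prod_smul]
    rw [← hw, NormalWord.prod]
    simp [listProd, CoprodI.Word.prod, map_list_prod, Function.comp_def]

theorem mem_range_of_of_conj_mem_range_of (hφ : ∀ i, Function.Injective (φ i)) {j : ι}
    {x : K j} (hx : ∀ c : K j, c * x * c⁻¹ ∉ (φ j).range) {g : PushoutI φ} {i : ι}
    (h : g * of j x * g⁻¹ ∈ (of (φ := φ) i).range) : g ∈ (of (φ := φ) j).range := by
  obtain ⟨b, l, hl, rfl⟩ := exists_eq_base_mul_listProd hφ g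
  have hb : ∀ k, base φ b ∈ (of (φ := φ) k).range := fun k =>
    ⟨φ k b, of_apply_eq_base φ k b⟩
  refine mul_mem (hb j) (hl.listProd_mem_range_of_conj hφ hx (i := i) ?_)
  rw [show listProd φ l * of j x * (listProd φ l)⁻¹ = (base φ b)⁻¹ *
      (base φ b * listProd φ l * of j x * (base φ b * listProd φ l)⁻¹) * base φ b by group]
  exact mul_mem (mul_mem (inv_mem (hb i)) h) (hb i)

theorem conj_of_notMem_range_of (hφ : ∀ i, Function.Injective (φ i)) {i j : ι} (hij : i ≠ j)
    {x : K j} (hx : ∀ c : K j, c * x * c⁻¹ ∉ (φ j).range) (g : PushoutI φ) :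
    g * of j x * g⁻¹ ∉ (of (φ := φ) i).range := by
  intro h
  obtain ⟨c, rfl⟩ := mem_range_of_of_conj_mem_range_of hφ hx h
  rw [← map_inv, ← map_mul, ← map_mul] at h
  have hbase := (inf_of_range_eq_base_range hφ hij).le ⟨h, ⟨_, rfl⟩⟩
  exact hx c ((of_mem_range_base_iff hφ).1 hbase)

end Monoid.PushoutI

namespace GP

variable {V : Type} {Γ : SimpleGraph V} {G : V → Type} [∀ v, Group (G v)]

theorem of_commute {u v : V} (h : Γ.Adj u v) (g : G u) (k : G v) :
    Commute (GP.of Γ G u g) (GP.of Γ G v k) := by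
  have : QuotientGroup.mk' (gpRel Γ G) ⁅CoprodI.of g, CoprodI.of k⁆ = 1 :=
    (QuotientGroup.eq_one_iff _).2 (Subgroup.subset_normalClosure ⟨u, v, g, k, h, rfl⟩)
  rw [map_commutatorElement] at this
  exact commutatorElement_eq_one_iff_commute.1 this

def lift {K : Type*} [Group K] (f : ∀ v, G v →* K)
    (hf : ∀ u v, Γ.Adj u v → ∀ g k, Commute (f u g) (f v k)) : GP Γ G →* K :=
  QuotientGroup.lift (gpRel Γ G) (CoprodI.lift f) <| by
    refine Subgroup.normalClosure_le_normal ?_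
    rintro _ ⟨u, v, g, k, huv, rfl⟩
    rw [SetLike.mem_coe, MonoidHom.mem_ker, map_commutatorElement,
      commutatorElement_eq_one_iff_commute, CoprodI.lift_of, CoprodI.lift_of]
    exact hf u v huv g k

@[simp]
theorem lift_of {K : Type*} [Group K] (f : ∀ v, G v →* K) (hf) (u : V) (g : G u) :
    lift (Γ := Γ) f hf (GP.of Γ G u g) = f u g :=
  CoprodI.lift_of f g

@[ext]
theorem hom_ext {K : Type*} [Group K] {f f' : GP Γ G →* K}
    (h : ∀ u, f.comp (GP.of Γ G u) = f'.comp (GP.of Γ G u)) : f = f' :=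
  QuotientGroup.monoidHom_ext _ (CoprodI.ext_hom _ _ h)

theorem of_mem_WS {S : Set V} {u : V} (hu : u ∈ S) (g : G u) : GP.of Γ G u g ∈ WS Γ G S :=
  le_iSup₂ (f := fun u (_ : u ∈ S) => (GP.of Γ G u).range) u hu ⟨g, rfl⟩

theorem WS_le_iff {S : Set V} {H : Subgroup (GP Γ G)} :
    WS Γ G S ≤ H ↔ ∀ u ∈ S, ∀ g : G u, GP.of Γ G u g ∈ H := by
  refine iSup₂_le_iff.trans (forall₂_congr fun u _ => ?_)
  exact ⟨fun h g => h ⟨g, rfl⟩, fun h _ ⟨g, hg⟩ => hg ▸ h g⟩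

theorem WS_mono {S T : Set V} (h : S ⊆ T) : WS Γ G S ≤ WS Γ G T :=
  WS_le_iff.2 fun _ hu g => of_mem_WS (h hu) g

theorem WS_univ : WS Γ G Set.univ = ⊤ := by
  rw [eq_top_iff]
  rintro x -
  obtain ⟨x, rfl⟩ := QuotientGroup.mk'_surjective (gpRel Γ G) x
  induction x using CoprodI.induction_on with
  | one => exact one_mem _
  | of u g => exact of_mem_WS (Set.mem_univ u) g
  | mul x y hx hy => rw [map_mul]; exact mul_mem hx hy

open Classical in
variable (Γ G) in
noncomputable def retract (S : Set V) : GP Γ G →* GP Γ G :=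
  lift (fun u => if u ∈ S then GP.of Γ G u else 1) fun u v huv g k => by
    by_cases hu : u ∈ S <;> by_cases hv : v ∈ S <;> simp [hu, hv, of_commute huv]

theorem retract_of_mem {S : Set V} {u : V} (hu : u ∈ S) (g : G u) :
    retract Γ G S (GP.of Γ G u g) = GP.of Γ G u g := by
  simp [retract, hu]

theorem retract_of_notMem {S : Set V} {u : V} (hu : u ∉ S) (g : G u) :
    retract Γ G S (GP.of Γ G u g) = 1 := by
  simp [retract, hu]

theorem retract_eq_self {S : Set V} {x : GP Γ G} (hx : x ∈ WS Γ G S) : retract Γ G S x = x :=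
  (WS_le_iff (H := (retract Γ G S).eqLocus (MonoidHom.id _))).2
    (fun _ hu g => retract_of_mem hu g) hx

theorem retract_mem_WS_inter {S T : Set V} {x : GP Γ G} (hx : x ∈ WS Γ G T) :
    retract Γ G S x ∈ WS Γ G (S ∩ T) := by
  refine (WS_le_iff (H := (WS Γ G (S ∩ T)).comap (retract Γ G S))).2 (fun u hu g => ?_) hx
  by_cases huS : u ∈ S
  · simpa [retract_of_mem huS] using of_mem_WS (Γ := Γ) (Set.mem_inter huS hu) g
  · simp [retract_of_notMem huS]

theorem WS_inter (S T : Set V) : WS Γ G (S ∩ T) = WS Γ G S ⊓ WS Γ G T :=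
  le_antisymm (le_inf (WS_mono Set.inter_subset_left) (WS_mono Set.inter_subset_right))
    fun _ ⟨hS, hT⟩ => retract_eq_self hS ▸ retract_mem_WS_inter hT

theorem mem_WS_sInter {𝒮 : Set (Set V)} (h𝒮 : 𝒮.Finite) {x : GP Γ G}
    (hx : ∀ S ∈ 𝒮, x ∈ WS Γ G S) : x ∈ WS Γ G (⋂₀ 𝒮) := by
  induction 𝒮, h𝒮 using Set.Finite.induction_on with
  | empty => simp [WS_univ]
  | insert _ _ ih =>
    rw [Set.sInter_insert, WS_inter]
    exact ⟨hx _ (Set.mem_insert _ _), ih fun S hS => hx S (Set.mem_insert_of_mem _ hS)⟩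

theorem supp_subset {S : Set V} {x : GP Γ G} (hx : x ∈ WS Γ G S) : supp Γ G x ⊆ S :=
  Set.sInter_subset_of_mem hx

theorem mem_WS_supp [Finite V] (x : GP Γ G) : x ∈ WS Γ G (supp Γ G x) :=
  mem_WS_sInter (Set.toFinite _) fun _ hS => hS

theorem mem_WS_iff_supp_subset [Finite V] {S : Set V} {x : GP Γ G} :
    x ∈ WS Γ G S ↔ supp Γ G x ⊆ S :=
  ⟨supp_subset, fun h => WS_mono h (mem_WS_supp x)⟩

theorem commute_of_mem_WS {S : Set V} {x y : GP Γ G}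
    (hy : ∀ u ∈ S, ∀ g : G u, Commute (GP.of Γ G u g) y) (hx : x ∈ WS Γ G S) :
    Commute x y :=
  Subgroup.mem_centralizer_singleton_iff.1
    ((WS_le_iff (H := Subgroup.centralizer {y})).2
      (fun u hu g => Subgroup.mem_centralizer_singleton_iff.2 (hy u hu g).eq) hx)

variable (Γ G) in
/-- The factors `W(V ∖ {v})` and `W(lk v) × G v` of the splitting of `W(Γ)` at `v` as an
amalgamated product over `W(lk v)`. -/
abbrev splitFactor (v : V) : Bool → Type
  | false => WS Γ G {v}ᶜ
  | true => WS Γ G (Γ.neighborSet v) × G v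

instance (v : V) : ∀ i, Group (splitFactor Γ G v i)
  | false => inferInstanceAs (Group (WS Γ G {v}ᶜ))
  | true => inferInstanceAs (Group (WS Γ G (Γ.neighborSet v) × G v))

theorem WS_neighborSet_le_compl (v : V) : WS Γ G (Γ.neighborSet v) ≤ WS Γ G {v}ᶜ :=
  WS_mono fun _ hw => (Γ.ne_of_adj hw).symm

variable (Γ G) in
def splitMap (v : V) : ∀ i, WS Γ G (Γ.neighborSet v) →* splitFactor Γ G v i
  | false => Subgroup.inclusion (WS_neighborSet_le_compl v)
  | true => MonoidHom.inl _ _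

theorem coe_splitMap_false (v : V) (z : WS Γ G (Γ.neighborSet v)) :
    ((splitMap Γ G v false z : WS Γ G {v}ᶜ) : GP Γ G) = z :=
  Subgroup.coe_inclusion (WS_neighborSet_le_compl v) z

theorem splitMap_injective (v : V) : ∀ i, Function.Injective (splitMap Γ G v i)
  | false => Subgroup.inclusion_injective (WS_neighborSet_le_compl v)
  | true => fun _ _ h => congr_arg Prod.fst h

theorem of_false_eq_of_true {v : V} {x : GP Γ G} (hx : x ∈ WS Γ G (Γ.neighborSet v)) :
    PushoutI.of (φ := splitMap Γ G v) false ⟨x, WS_neighborSet_le_compl v hx⟩ =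
      PushoutI.of true (⟨x, hx⟩, 1) := by
  have h₁ := PushoutI.of_apply_eq_base (splitMap Γ G v) false ⟨x, hx⟩
  have h₂ := PushoutI.of_apply_eq_base (splitMap Γ G v) true ⟨x, hx⟩
  exact h₁.trans h₂.symm

theorem commute_of_true_of_false_of_adj {v w : V} (hvw : Γ.Adj v w) (g : G v) (k : G w) :
    Commute (PushoutI.of (φ := splitMap Γ G v) true (1, g))
      (PushoutI.of false
        ⟨GP.of Γ G w k, of_mem_WS (S := {v}ᶜ) (Γ.ne_of_adj hvw).symm k⟩) := by
  rw [of_false_eq_of_true (of_mem_WS hvw k)]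
  exact Commute.map (by simp [Commute, SemiconjBy]) _

open Classical in
variable (Γ G) in
noncomputable def toSplit (v : V) : GP Γ G →* PushoutI (splitMap Γ G v) :=
  lift (fun u => if h : u = v then h ▸ (PushoutI.of true).comp (MonoidHom.inr _ _)
      else (PushoutI.of false).comp ((GP.of Γ G u).codRestrict _ (of_mem_WS (S := {v}ᶜ) h)))
    fun u w huw g k => by
      by_cases hu : u = v <;> by_cases hw : w = v
      · exact (Γ.irrefl (hu ▸ hw ▸ huw)).elim
      · subst hu
        simpa [hw] using commute_of_true_of_false_of_adj huw g k
      · subst hw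
        simpa [hu] using (commute_of_true_of_false_of_adj huw.symm k g).symm
      · simp only [hu, hw, dite_false, MonoidHom.comp_apply]
        exact Commute.map (Subtype.ext (of_commute huw g k).eq) _

theorem toSplit_of_self (v : V) (g : G v) :
    toSplit Γ G v (GP.of Γ G v g) = PushoutI.of true (1, g) := by
  simp [toSplit]

theorem toSplit_of_ne {u v : V} (h : u ≠ v) (g : G u) :
    toSplit Γ G v (GP.of Γ G u g) =
      PushoutI.of false ⟨GP.of Γ G u g, of_mem_WS (S := {v}ᶜ) h g⟩ := by
  simp [toSplit, h]

variable (Γ G) in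
noncomputable def fromSplit (v : V) : PushoutI (splitMap Γ G v) →* GP Γ G :=
  PushoutI.lift
    (fun
      | false => (WS Γ G {v}ᶜ).subtype
      | true => MonoidHom.noncommCoprod (WS Γ G (Γ.neighborSet v)).subtype (GP.of Γ G v)
          fun c g => commute_of_mem_WS (fun _ hu k => of_commute hu.symm k g) c.2)
    (WS Γ G (Γ.neighborSet v)).subtype
    fun
      | false => Subgroup.subtype_comp_inclusion (WS_neighborSet_le_compl v)
      | true => MonoidHom.noncommCoprod_comp_inl _ _ _

theorem fromSplit_of_false (v : V) (a : WS Γ G {v}ᶜ) :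
    fromSplit Γ G v (PushoutI.of false a) = a := by
  rw [fromSplit, PushoutI.lift_of]
  rfl

theorem fromSplit_of_true (v : V) (b : WS Γ G (Γ.neighborSet v) × G v) :
    fromSplit Γ G v (PushoutI.of true b) = b.1 * GP.of Γ G v b.2 := by
  rw [fromSplit, PushoutI.lift_of]
  rfl

theorem fromSplit_toSplit (v : V) (x : GP Γ G) : fromSplit Γ G v (toSplit Γ G v x) = x := by
  suffices (fromSplit Γ G v).comp (toSplit Γ G v) = MonoidHom.id _ from
    DFunLike.congr_fun this x
  ext u g
  by_cases hu : u = v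
  · subst hu
    rw [MonoidHom.comp_apply, MonoidHom.comp_apply, toSplit_of_self, fromSplit_of_true]
    simp
  · rw [MonoidHom.comp_apply, MonoidHom.comp_apply, toSplit_of_ne hu, fromSplit_of_false]
    rfl

theorem toSplit_of_mem_compl {v : V} {x : GP Γ G} (hx : x ∈ WS Γ G {v}ᶜ) :
    toSplit Γ G v x = PushoutI.of false ⟨x, hx⟩ := by
  obtain ⟨a, ha⟩ : toSplit Γ G v x ∈ (PushoutI.of false).range := Subgroup.mem_comap.1 <|
    (WS_le_iff (H := (PushoutI.of false).range.comap (toSplit Γ G v))).2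
      (fun u hu g => ⟨_, (toSplit_of_ne hu g).symm⟩) hx
  obtain rfl : a = ⟨x, hx⟩ :=
    Subtype.ext (by rw [← fromSplit_of_false v a, ha, fromSplit_toSplit])
  exact ha.symm

theorem toSplit_mem_range_of_true {v : V} {x : GP Γ G}
    (hx : x ∈ WS Γ G (insert v (Γ.neighborSet v))) :
    toSplit Γ G v x ∈ (PushoutI.of true).range := by
  refine (WS_le_iff (H := (PushoutI.of true).range.comap (toSplit Γ G v))).2
    (fun u hu g => ?_) hx
  rcases hu with rfl | hu
  · exact ⟨_, (toSplit_of_self u g).symm⟩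
  · exact ⟨_, ((toSplit_of_ne (Γ.ne_of_adj hu).symm g).trans
      (of_false_eq_of_true (of_mem_WS hu g))).symm⟩

variable [Finite V]

theorem mem_of_conj_mem_WS {x k : GP Γ G} {u : V} (hu : u ∈ supp Γ G x)
    (hcone : supp Γ G x ⊆ insert u (Γ.neighborSet u)) {S : Set V}
    (hk : k * x * k⁻¹ ∈ WS Γ G S) : u ∈ S := by
  -- Split at `u`: `x` lies in the factor `W(lk u) × G u` with nontrivial `G u`-coordinate, so
  -- none of its conjugates lies in the other factor `W(V ∖ {u})`.
  by_contra huS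
  obtain ⟨x₁, hx₁⟩ := toSplit_mem_range_of_true (mem_WS_iff_supp_subset.2 hcone)
  have hx₁_snd : x₁.2 ≠ 1 := by
    intro h1
    have hx : x ∈ WS Γ G (Γ.neighborSet u) := by
      rw [← fromSplit_toSplit u x, ← hx₁, fromSplit_of_true, h1, map_one, mul_one]
      exact x₁.1.2
    exact Γ.irrefl (supp_subset hx hu)
  have hconj : ∀ c, c * x₁ * c⁻¹ ∉ (splitMap Γ G u true).range := by
    rintro c ⟨z, hz⟩
    exact hx₁_snd (conj_eq_one_iff.1 (congr_arg Prod.snd hz).symm)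
  apply PushoutI.conj_of_notMem_range_of (splitMap_injective u) Bool.false_ne_true hconj
    (toSplit Γ G u k)
  rw [hx₁, ← map_inv, ← map_mul, ← map_mul,
    toSplit_of_mem_compl (WS_mono (Set.subset_compl_singleton_iff.2 huS) hk)]
  exact ⟨_, rfl⟩

theorem mem_WS_compl_singleton_of_conj_mem {x w : GP Γ G} (hx : Γ.IsClique (supp Γ G x))
    {v u : V} (hv : v ∉ supp Γ G x) (hu : u ∈ supp Γ G x) (hvu : ¬Γ.Adj v u)
    (hw : w * x * w⁻¹ ∈ WS Γ G {v}ᶜ) : w ∈ WS Γ G {v}ᶜ := by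
  have hxA : x ∈ WS Γ G {v}ᶜ := mem_WS_iff_supp_subset.2 (Set.subset_compl_singleton_iff.2 hv)
  have hcone : supp Γ G x ⊆ insert u (Γ.neighborSet u) := fun t ht =>
    (eq_or_ne t u).imp id fun htu => hx hu ht htu.symm
  have hconj : ∀ c, c * ⟨x, hxA⟩ * c⁻¹ ∉ (splitMap Γ G v false).range := by
    rintro c ⟨z, hz⟩
    have hz' : (z : GP Γ G) = c * x * c⁻¹ :=
      (coe_splitMap_false v z).symm.trans (congr_arg Subtype.val hz)
    have hc : (c : GP Γ G) * x * (c : GP Γ G)⁻¹ ∈ WS Γ G (Γ.neighborSet v) := hz' ▸ z.2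
    exact hvu (mem_of_conj_mem_WS hu hcone hc)
  obtain ⟨a, ha⟩ := PushoutI.mem_range_of_of_conj_mem_range_of (splitMap_injective v) hconj
    (g := toSplit Γ G v w) (i := false) <| by
      rw [← toSplit_of_mem_compl hxA, ← map_inv, ← map_mul, ← map_mul,
        toSplit_of_mem_compl hw]
      exact ⟨_, rfl⟩
  rw [← fromSplit_toSplit v w, ← ha, fromSplit_of_false]
  exact a.2

end GP

theorem centralizer_of_CP_element_general
    {V : Type} [Fintype V] (Λ : SimpleGraph V)
    (G : V → Type) [∀ v, Group (G v)]
    (hG : ∀ v, DICyclic (G v))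
    (x : GP Λ G) (hx : ∃ Δ : Set V, Λ.IsClique Δ ∧ x ∈ WS Λ G Δ) :
    Subgroup.centralizer {x} =
      WS Λ G (supp Λ G x ∪ {v : V | ∀ u ∈ supp Λ G x, Λ.Adj v u}) := by
  obtain ⟨Δ, hΔ, hxΔ⟩ := hx
  have hclique : Λ.IsClique (supp Λ G x) := hΔ.subset (GP.supp_subset hxΔ)
  refine le_antisymm (fun w hw => ?_) (GP.WS_le_iff.2 fun v hv g => ?_)
  · have hconj : w * x * w⁻¹ = x := by
      rw [Subgroup.mem_centralizer_singleton_iff.1 hw, mul_inv_cancel_right]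
    refine GP.mem_WS_iff_supp_subset.2 fun v hvw => ?_
    by_contra hv
    simp only [Set.mem_union, Set.mem_ofPred_eq, not_or, not_forall] at hv
    obtain ⟨hv, u, hu, hvu⟩ := hv
    have hxv : w * x * w⁻¹ ∈ WS Λ G {v}ᶜ := by
      rw [hconj]
      exact GP.mem_WS_iff_supp_subset.2 (Set.subset_compl_singleton_iff.2 hv)
    exact GP.supp_subset (GP.mem_WS_compl_singleton_of_conj_mem hclique hv hu hvu hxv) hvw rfl
  · refine Subgroup.mem_centralizer_singleton_iff.2 (GP.commute_of_mem_WS (fun u hu k => ?_)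
      (GP.mem_WS_supp x)).eq.symm
    rcases hv with hv | hv
    · rcases eq_or_ne u v with rfl | huv
      · have := (hG u).1
        let := IsCyclic.commGroup (α := G u)
        exact (Commute.all k g).map (GP.of Λ G u)
      · exact GP.of_commute (hclique hu hv huv) k g
    · exact GP.of_commute (hv u hu).symm k g

/-- The centralizer of a CP element `x` of a graph product of
directly-indecomposable cyclic groups is `W(star(x))`, where `star(x)` consists
of `supp(x)` together with all vertices adjacent to every vertex of `supp(x)`. -/
theorem centralizer_of_CP_element
    {V : Type} [Fintype V] [Nonempty V] (Λ : SimpleGraph V)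
    (G : V → Type) [∀ v, Group (G v)] [∀ v, Nontrivial (G v)]
    (hG : ∀ v, DICyclic (G v))
    (x : GP Λ G) (hx : ∃ Δ : Set V, Λ.IsClique Δ ∧ x ∈ WS Λ G Δ) :
    Subgroup.centralizer {x} =
      WS Λ G (supp Λ G x ∪ {v : V | ∀ u ∈ supp Λ G x, Λ.Adj v u}) :=
  centralizer_of_CP_element_general Λ G hG x hx
end

section
/- For any labeled-graph (Λ, 𝒢), the T₀-quotient graph Λ₀ satisfies the T₀ property: every equivalence class of vertices of Λ₀ under the relation ∼_{Λ₀} is a singleton. -/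
/-!
Equivalent vertices of `Λ` are adjacent and have the same neighbours, so `Λ₀`-adjacency of two
classes lifts to every pair of representatives. Hence the preimage of a clique of `Λ₀` is a
clique of `Λ`, and the image of a maximal clique `s` of `Λ` is a maximal clique of `Λ₀`; as `s`
is a union of classes, the class `[u]` lies in the image `[s]` iff `u ∈ s`. So if `[u]` and
`[v]` lie in the same maximal cliques of `Λ₀`, then `u` and `v` lie in the same maximal cliques
of `Λ`, i.e. `[u] = [v]`.
-/

open Monoid

open scoped commutatorElement

theorem SimpleGraph.IsClique.exists_maximal_superset {V : Type*} {Λ : SimpleGraph V} {s : Set V}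
    (hs : Λ.IsClique s) : ∃ t, s ⊆ t ∧ Maximal Λ.IsClique t :=
  zorn_subset_nonempty {t | Λ.IsClique t}
    (fun _ hc hchain _ => ⟨_, hchain.pairwise_sUnion.2 hc, fun _ => Set.subset_sUnion_of_mem⟩) s hs

section T0Quotient

variable {V : Type} {Λ : SimpleGraph V}

local notation "mk" => Quotient.mk (simSetoid Λ)

theorem adj_of_simSetoid_rel {u u' : V} (h : simSetoid Λ u u') (hne : u ≠ u') : Λ.Adj u u' := by
  obtain ⟨t, hut, ht⟩ := (Λ.isClique_singleton u).exists_maximal_superset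
  exact ht.1 (hut rfl) ((h t ht).1 (hut rfl)) hne

theorem adj_of_simSetoid_rel_of_adj {u u' v : V} (h : simSetoid Λ u u') (hadj : Λ.Adj u v)
    (hne : u' ≠ v) : Λ.Adj u' v := by
  obtain ⟨t, huvt, ht⟩ := (Λ.isClique_pair.2 fun _ => hadj).exists_maximal_superset
  exact ht.1 ((h t ht).1 (huvt (Set.mem_insert u {v}))) (huvt (Set.mem_insert_of_mem u rfl)) hne

theorem adj_of_T0Q_adj {u v : V} (h : (T0Q Λ).Adj (mk u) (mk v)) : Λ.Adj u v := by
  obtain ⟨hne, x, y, hxu, hyv, hxy⟩ := h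
  have huy : Λ.Adj u y :=
    adj_of_simSetoid_rel_of_adj (Quotient.exact hxu) hxy fun e => hne (by rw [e, hyv])
  exact (adj_of_simSetoid_rel_of_adj (Quotient.exact hyv) huy.symm fun e => hne (by rw [e])).symm

theorem isClique_preimage_mk {t : Set (Quotient (simSetoid Λ))} (ht : (T0Q Λ).IsClique t) :
    Λ.IsClique (mk ⁻¹' t) := by
  intro u hu v hv huv
  by_cases hq : mk u = mk v
  · exact adj_of_simSetoid_rel (Quotient.exact hq) huv
  · exact adj_of_T0Q_adj (ht hu hv hq)

theorem isClique_image_mk {s : Set V} (hs : Λ.IsClique s) : (T0Q Λ).IsClique (mk '' s) := by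
  rintro _ ⟨u, hu, rfl⟩ _ ⟨v, hv, rfl⟩ hq
  exact ⟨hq, u, v, rfl, rfl, hs hu hv fun e => hq (congrArg _ e)⟩

theorem maximal_isClique_image_mk {s : Set V} (hs : Maximal Λ.IsClique s) :
    Maximal (T0Q Λ).IsClique (mk '' s) := by
  refine ⟨isClique_image_mk hs.1, fun t ht hst => ?_⟩
  rintro ⟨u⟩ hu
  exact ⟨u, hs.2 (isClique_preimage_mk ht) (Set.image_subset_iff.1 hst) hu, rfl⟩

theorem mk_mem_image_mk_iff {s : Set V} (hs : Maximal Λ.IsClique s) {u : V} :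
    mk u ∈ mk '' s ↔ u ∈ s :=
  ⟨fun ⟨_, hx, hxu⟩ => (Quotient.exact hxu s hs).1 hx, fun hu => ⟨u, hu, rfl⟩⟩

end T0Quotient

theorem t0_quotient_satisfies_t0_general
    {V : Type} (Λ : SimpleGraph V) :
    ∀ a b : Quotient (simSetoid Λ),
      (∀ s : Set (Quotient (simSetoid Λ)), Maximal (T0Q Λ).IsClique s → (a ∈ s ↔ b ∈ s)) →
        a = b := by
  intro a b
  refine Quotient.inductionOn₂ a b fun u v h => Quotient.sound fun s hs => ?_
  simpa only [mk_mem_image_mk_iff hs] using h _ (maximal_isClique_image_mk hs)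

/-- The `T₀`-quotient graph satisfies the `T₀` property: every `∼`-class of
vertices of `Λ₀` is a singleton. -/
theorem t0_quotient_satisfies_t0
    {V : Type} [Fintype V] [Nonempty V] (Λ : SimpleGraph V)
    (G : V → Type) [∀ v, Group (G v)] [∀ v, Nontrivial (G v)] :
    ∀ a b : Quotient (simSetoid Λ),
      (∀ s : Set (Quotient (simSetoid Λ)), Maximal (T0Q Λ).IsClique s → (a ∈ s ↔ b ∈ s)) →
        a = b :=
  t0_quotient_satisfies_t0_general Λ
end

section
/- Let (Λ, 𝒢_Λ) and (Ξ, 𝒢_Ξ) be labeled-graphs in which every vertex group is a directly-indecomposable cyclic group. Then (Λ, 𝒢_Λ) and (Ξ, 𝒢_Ξ) are isomorphic as labeled-graphs if and only if their T₀-quotients (Λ₀, 𝒢_{Λ₀}) and (Ξ₀, 𝒢_{Ξ₀}) are isomorphic as labeled-graphs. -/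
open Monoid

open scoped commutatorElement

/-- A labeled-graph isomorphism: an adjacency-preserving bijection of the
vertex sets with isomorphic corresponding vertex groups. -/
def IsLabIso {V W : Type} (Γ : SimpleGraph V) (Δ : SimpleGraph W)
    (G : V → Type) (H : W → Type) [∀ v, Group (G v)] [∀ w, Group (H w)] : Prop :=
  ∃ f : V ≃ W, (∀ u v : V, Γ.Adj u v ↔ Δ.Adj (f u) (f v)) ∧
    ∀ u : V, Nonempty (G u ≃* H (f u))

/-!
A labeled-graph isomorphism carries maximal cliques to maximal cliques, so it descends to the
`T₀`-quotients and matches the vertex groups of corresponding classes factor by factor. Conversely,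
two vertices in different classes are adjacent iff their classes are, and two distinct vertices
of one class are always adjacent; so an isomorphism of `T₀`-quotients lifts as soon as the
vertices of corresponding classes can be matched by isomorphic vertex groups. That is a
Krull–Schmidt statement for finite products of directly-indecomposable cyclic groups, proved by
counting: `|Hom(∏ Gᵢ, ℤ/m)| = ∏ gcd(m, |Gᵢ|)` (with `|ℤ| = 0`) is an isomorphism invariant, the
values at `m = pᵏ` count the factors of order `pⁿ`, and those at a huge power of `2` count the
infinite factors.
-/

open Finset

theorem Equiv.nonempty_mulEquiv_piCongr {ι κ : Type*} {G : ι → Type*} {H : κ → Type*}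
    [∀ i, Mul (G i)] [∀ j, Mul (H j)] (f : ι ≃ κ) (h : ∀ i, Nonempty (G i ≃* H (f i))) :
    Nonempty ((∀ i, G i) ≃* ∀ j, H j) :=
  ⟨(MulEquiv.piCongrRight fun i => (h i).some).trans
    ({ Equiv.piCongrLeft' H f.symm with map_mul' := fun _ _ => rfl } :
      (∀ j, H j) ≃* ∀ i, H (f i)).symm⟩

def Equiv.ofFiberEquivOver {α β γ δ : Type*} {p : α → γ} {q : β → δ} (F : γ ≃ δ)
    (e : ∀ c, {a // p a = c} ≃ {b // q b = F c}) : α ≃ β :=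
  (Equiv.sigmaFiberEquiv p).symm.trans ((Equiv.sigmaCongr F e).trans (Equiv.sigmaFiberEquiv q))

theorem gcd_prime_pow_succ {p : ℕ} (hp : p.Prime) (k c : ℕ) :
    (p ^ (k + 1)).gcd c = (if p ^ (k + 1) ∣ c then p else 1) * (p ^ k).gcd c := by
  split_ifs with h
  · rw [Nat.gcd_eq_left h, Nat.gcd_eq_left ((pow_dvd_pow p k.le_succ).trans h), pow_succ,
      mul_comm]
  · obtain ⟨j, hj, hgcd⟩ := (Nat.dvd_prime_pow hp).1 (Nat.gcd_dvd_left (p ^ (k + 1)) c)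
    have hjk : j ≤ k := by
      refine Nat.le_of_lt_succ (lt_of_le_of_ne hj ?_)
      rintro rfl
      exact h (hgcd ▸ Nat.gcd_dvd_right _ c)
    rw [one_mul]
    refine Nat.dvd_antisymm ?_ (Nat.gcd_dvd_gcd_of_dvd_left c (pow_dvd_pow p k.le_succ))
    exact Nat.dvd_gcd (hgcd ▸ pow_dvd_pow p hjk) (Nat.gcd_dvd_right _ c)

section Counting

variable {ι κ : Type*} [Fintype ι] [Fintype κ]

theorem prod_gcd_prime_pow_succ {p : ℕ} (hp : p.Prime) (c : ι → ℕ) (k : ℕ) :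
    ∏ i, (p ^ (k + 1)).gcd (c i) = p ^ #{i | p ^ (k + 1) ∣ c i} * ∏ i, (p ^ k).gcd (c i) := by
  simp only [gcd_prime_pow_succ hp k, prod_mul_distrib]
  rw [prod_ite, prod_const, prod_const_one, mul_one]

theorem card_filter_pow_dvd_eq_of_prod_gcd_eq {p : ℕ} (hp : p.Prime) {c : ι → ℕ} {d : κ → ℕ}
    (h : ∀ m ≠ 0, ∏ i, m.gcd (c i) = ∏ j, m.gcd (d j)) (k : ℕ) :
    #{i | p ^ (k + 1) ∣ c i} = #{j | p ^ (k + 1) ∣ d j} := by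
  have hpk : p ^ k ≠ 0 := pow_ne_zero k hp.ne_zero
  have hpos : ∏ j, (p ^ k).gcd (d j) ≠ 0 :=
    prod_ne_zero_iff.2 fun j _ => (Nat.gcd_pos_of_pos_left _ (Nat.pos_of_ne_zero hpk)).ne'
  have key := h _ (pow_ne_zero (k + 1) hp.ne_zero)
  rw [prod_gcd_prime_pow_succ hp, prod_gcd_prime_pow_succ hp, h _ hpk] at key
  exact Nat.pow_right_injective hp.two_le (mul_right_cancel₀ hpos key)

theorem pow_dvd_iff_pow_succ_dvd_or_eq {p c n : ℕ} (hp : p.Prime) (hc : c = 0 ∨ IsPrimePow c)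
    (hn : n ≠ 0) :
    p ^ n ∣ c ↔ p ^ (n + 1) ∣ c ∨ c = p ^ n := by
  refine ⟨fun h => ?_, ?_⟩
  · obtain rfl | hc := hc
    · exact Or.inl (dvd_zero _)
    obtain ⟨q, m, hq, -, rfl⟩ := (isPrimePow_nat_iff c).1 hc
    obtain rfl : p = q :=
      (Nat.prime_dvd_prime_iff_eq hp hq).1 (hp.dvd_of_dvd_pow ((dvd_pow_self p hn).trans h))
    rw [Nat.pow_dvd_pow_iff_le_right hp.one_lt] at h ⊢
    rcases h.lt_or_eq with h | rfl
    · exact Or.inl h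
    · exact Or.inr rfl
  · rintro (h | rfl)
    · exact (pow_dvd_pow p n.le_succ).trans h
    · exact dvd_rfl

theorem card_filter_pow_dvd_eq_add {p : ℕ} (hp : p.Prime) {c : ι → ℕ}
    (hc : ∀ i, c i = 0 ∨ IsPrimePow (c i)) {n : ℕ} (hn : n ≠ 0) :
    #{i | p ^ n ∣ c i} = #{i | p ^ (n + 1) ∣ c i} + #{i | c i = p ^ n} := by
  classical
  rw [filter_congr fun i _ => pow_dvd_iff_pow_succ_dvd_or_eq hp (hc i) hn, filter_or,
    card_union_of_disjoint (disjoint_filter.2 fun i _ h h' => ?_)]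
  rw [h', Nat.pow_dvd_pow_iff_le_right hp.one_lt] at h
  omega

theorem filter_eq_zero_eq_filter_pow_dvd {c : ι → ℕ} {m : ℕ} (hc : ∀ i, c i < m) :
    univ.filter (fun i => c i = 0) = univ.filter (fun i => m ∣ c i) :=
  filter_congr fun i _ => ⟨fun h => h ▸ dvd_zero m, fun h => Nat.eq_zero_of_dvd_of_lt h (hc i)⟩

theorem card_filter_eq_of_prod_gcd_eq {c : ι → ℕ} {d : κ → ℕ}
    (hc : ∀ i, c i = 0 ∨ IsPrimePow (c i)) (hd : ∀ j, d j = 0 ∨ IsPrimePow (d j))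
    (h : ∀ m ≠ 0, ∏ i, m.gcd (c i) = ∏ j, m.gcd (d j)) (N : ℕ) :
    #{i | c i = N} = #{j | d j = N} := by
  obtain rfl | hN := eq_or_ne N 0
  · set K := ∑ i, c i + ∑ j, d j
    have hcK (i : ι) : c i < 2 ^ (K + 1) :=
      (Nat.lt_succ_of_le ((single_le_sum (fun _ _ => Nat.zero_le _) (mem_univ i)).trans
        (Nat.le_add_right _ _))).trans Nat.lt_two_pow_self
    have hdK (j : κ) : d j < 2 ^ (K + 1) :=
      (Nat.lt_succ_of_le ((single_le_sum (fun _ _ => Nat.zero_le _) (mem_univ j)).trans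
        (Nat.le_add_left _ _))).trans Nat.lt_two_pow_self
    rw [filter_eq_zero_eq_filter_pow_dvd hcK, filter_eq_zero_eq_filter_pow_dvd hdK]
    exact card_filter_pow_dvd_eq_of_prod_gcd_eq Nat.prime_two h K
  by_cases hNp : IsPrimePow N
  · obtain ⟨p, n, hp, hn, rfl⟩ := (isPrimePow_nat_iff N).1 hNp
    have hc' := card_filter_pow_dvd_eq_add hp hc hn.ne'
    have hd' := card_filter_pow_dvd_eq_add hp hd hn.ne'
    obtain ⟨n, rfl⟩ := Nat.exists_eq_add_of_lt hn
    have h1 := card_filter_pow_dvd_eq_of_prod_gcd_eq hp h n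
    have h2 := card_filter_pow_dvd_eq_of_prod_gcd_eq hp h (n + 1)
    simp only [zero_add] at hc' hd' h1 h2 ⊢
    omega
  · have hN' : ∀ x, x = 0 ∨ IsPrimePow x → x ≠ N := by
      rintro x (rfl | hx) rfl <;> contradiction
    rw [filter_false_of_mem fun i _ => hN' _ (hc i),
      filter_false_of_mem fun j _ => hN' _ (hd j)]
    rfl

end Counting

theorem IsCyclic.card_monoidHom_multiplicative_zmod (G : Type*) [Group G] [IsCyclic G]
    (m : ℕ) [NeZero m] :
    Nat.card (G →* Multiplicative (ZMod m)) = m.gcd (Nat.card G) := by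
  let := IsCyclic.commGroup (α := G)
  obtain ⟨φ⟩ := IsCyclic.monoidHom_mulEquiv_rootsOfUnity G (Multiplicative (ZMod m))
  have : IsCyclic (Multiplicative (ZMod m))ˣ :=
    isCyclic_of_surjective _ (toUnits (G := Multiplicative (ZMod m))).surjective
  rw [Nat.card_congr φ.toEquiv, rootsOfUnity_eq_ker, IsCyclic.card_powMonoidHom_ker,
    ← Nat.card_congr (toUnits (G := Multiplicative (ZMod m))).toEquiv]
  simp

theorem card_pi_monoidHom_multiplicative_zmod {ι : Type*} [Fintype ι] (G : ι → Type*)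
    [∀ i, Group (G i)] [∀ i, IsCyclic (G i)] (m : ℕ) [NeZero m] :
    Nat.card ((∀ i, G i) →* Multiplicative (ZMod m)) = ∏ i, m.gcd (Nat.card (G i)) := by
  classical
  let := fun i => IsCyclic.commGroup (α := G i)
  rw [Nat.card_congr (Pi.monoidHomMulEquiv G _).toEquiv, Nat.card_pi]
  exact prod_congr rfl fun i _ => IsCyclic.card_monoidHom_multiplicative_zmod (G i) m

theorem DICyclic.card_eq_zero_or_isPrimePow {G : Type} [Group G] [Nontrivial G]
    (h : DICyclic G) : Nat.card G = 0 ∨ IsPrimePow (Nat.card G) := by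
  obtain hinf | ⟨p, n, hp, hcard⟩ := h.2
  · exact Or.inl Nat.card_eq_zero_of_infinite
  · refine Or.inr ((isPrimePow_nat_iff _).2 ⟨p, n, hp, Nat.pos_of_ne_zero ?_, hcard.symm⟩)
    rintro rfl
    exact not_subsingleton G (Nat.card_eq_one_iff_unique.1 hcard).1

theorem exists_equiv_mulEquiv_of_pi_mulEquiv {ι κ : Type*} [Finite ι] [Finite κ]
    {G : ι → Type} {H : κ → Type} [∀ i, Group (G i)] [∀ j, Group (H j)]
    [∀ i, Nontrivial (G i)] [∀ j, Nontrivial (H j)]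
    (hG : ∀ i, DICyclic (G i)) (hH : ∀ j, DICyclic (H j)) (e : (∀ i, G i) ≃* ∀ j, H j) :
    ∃ f : ι ≃ κ, ∀ i, Nonempty (G i ≃* H (f i)) := by
  have := Fintype.ofFinite ι
  have := Fintype.ofFinite κ
  have := fun i => (hG i).1
  have := fun j => (hH j).1
  have hprod (m : ℕ) (hm : m ≠ 0) :
      ∏ i, m.gcd (Nat.card (G i)) = ∏ j, m.gcd (Nat.card (H j)) := by
    have : NeZero m := ⟨hm⟩
    rw [← card_pi_monoidHom_multiplicative_zmod, ← card_pi_monoidHom_multiplicative_zmod,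
      Nat.card_congr (e.monoidHomCongrLeftEquiv)]
  have hfiber (N : ℕ) :
      Fintype.card {i // Nat.card (G i) = N} = Fintype.card {j // Nat.card (H j) = N} := by
    simpa only [Fintype.card_subtype] using card_filter_eq_of_prod_gcd_eq
      (fun i => (hG i).card_eq_zero_or_isPrimePow) (fun j => (hH j).card_eq_zero_or_isPrimePow)
      hprod N
  let φ N := Fintype.equivOfCardEq (hfiber N)
  exact ⟨Equiv.ofFiberEquiv φ,
    fun i => ⟨mulEquivOfCyclicCardEq (Equiv.ofFiberEquiv_map φ i).symm⟩⟩

section T0Quotient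

variable {V W : Type} {Γ : SimpleGraph V} {Δ : SimpleGraph W}

theorem SimpleGraph.Iso.isClique_preimage (e : Γ ≃g Δ) {s : Set W} (hs : Δ.IsClique s) :
    Γ.IsClique (e ⁻¹' s) :=
  fun _ hu _ hv huv => e.map_adj_iff.1 (hs hu hv (e.injective.ne huv))

theorem SimpleGraph.Iso.maximal_isClique_preimage (e : Γ ≃g Δ) {s : Set W}
    (hs : Maximal Δ.IsClique s) : Maximal Γ.IsClique (e ⁻¹' s) := by
  refine ⟨e.isClique_preimage hs.1, fun t ht hst => ?_⟩
  have hts : e.symm ⁻¹' t ⊆ s :=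
    hs.2 (e.symm.isClique_preimage ht) fun w hw => hst (by simpa using hw)
  exact fun v hv => by simpa using hts (show e.symm (e v) ∈ t by simpa using hv)

theorem SimpleGraph.Iso.simSetoid_rel_iff (e : Γ ≃g Δ) (u v : V) :
    simSetoid Γ u v ↔ simSetoid Δ (e u) (e v) := by
  refine ⟨fun h s hs => h _ (e.maximal_isClique_preimage hs), fun h s hs => ?_⟩
  simpa using h _ (e.symm.maximal_isClique_preimage hs)

variable [Finite V]

variable (Γ) in
theorem adj_of_simSetoid_rel_s8 {u v u' v' : V} (hu : simSetoid Γ u u') (hv : simSetoid Γ v v')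
    (huv : Γ.IsClique {u, v}) (hne : u' ≠ v') : Γ.Adj u' v' := by
  obtain ⟨t, hsub, ht⟩ := Finite.exists_le_maximal huv
  exact ht.1 ((hu t ht).1 (hsub (by simp))) ((hv t ht).1 (hsub (by simp))) hne

theorem t0Q_adj_mk_iff {u v : V} :
    (T0Q Γ).Adj (Quotient.mk _ u) (Quotient.mk _ v) ↔
      Quotient.mk (simSetoid Γ) u ≠ Quotient.mk _ v ∧ Γ.Adj u v := by
  refine ⟨fun ⟨hne, u', v', hu, hv, h⟩ => ⟨hne, ?_⟩, fun ⟨hne, h⟩ => ⟨hne, u, v, rfl, rfl, h⟩⟩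
  exact adj_of_simSetoid_rel_s8 Γ (Quotient.exact hu) (Quotient.exact hv)
    (Γ.isClique_pair.2 fun _ => h) fun huv => hne (huv ▸ rfl)

theorem adj_iff_ne_of_mk_eq {u v : V} (h : Quotient.mk (simSetoid Γ) u = Quotient.mk _ v) :
    Γ.Adj u v ↔ u ≠ v :=
  ⟨SimpleGraph.Adj.ne, adj_of_simSetoid_rel_s8 Γ ((simSetoid Γ).refl u) (Quotient.exact h)
    (Γ.isClique_pair.2 fun huu => (huu rfl).elim)⟩

def SimpleGraph.Iso.t0Q [Finite W] (e : Γ ≃g Δ) : T0Q Γ ≃g T0Q Δ where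
  toEquiv := Quotient.congr e.toEquiv e.simSetoid_rel_iff
  map_rel_iff' {a b} := by
    refine Quotient.inductionOn₂ a b fun u v => ?_
    show (T0Q Δ).Adj (Quotient.mk _ (e u)) (Quotient.mk _ (e v)) ↔ _
    rw [t0Q_adj_mk_iff, t0Q_adj_mk_iff, e.map_adj_iff, Ne, Ne, Quotient.eq, Quotient.eq,
      ← e.simSetoid_rel_iff]

theorem adj_iff_t0Q_adj_of_mk_ne {u v : V}
    (h : Quotient.mk (simSetoid Γ) u ≠ Quotient.mk _ v) :
    Γ.Adj u v ↔ (T0Q Γ).Adj (Quotient.mk _ u) (Quotient.mk _ v) := by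
  rw [t0Q_adj_mk_iff, and_iff_right h]

def SimpleGraph.Iso.ofT0Q [Finite W] (F : T0Q Γ ≃g T0Q Δ) (f : V ≃ W)
    (hf : ∀ v, Quotient.mk (simSetoid Δ) (f v) = F (Quotient.mk _ v)) : Γ ≃g Δ where
  toEquiv := f
  map_rel_iff' {u v} := by
    by_cases h : Quotient.mk (simSetoid Γ) u = Quotient.mk _ v
    · rw [adj_iff_ne_of_mk_eq h, adj_iff_ne_of_mk_eq (by rw [hf, hf, h]), f.injective.ne_iff]
    · rw [adj_iff_t0Q_adj_of_mk_ne h,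
        adj_iff_t0Q_adj_of_mk_ne (by rwa [hf, hf, F.injective.ne_iff]), hf, hf, F.map_adj_iff]

end T0Quotient

theorem isLabIso_iff_exists_iso {V W : Type} {Γ : SimpleGraph V} {Δ : SimpleGraph W}
    {G : V → Type} {H : W → Type} [∀ v, Group (G v)] [∀ w, Group (H w)] :
    IsLabIso Γ Δ G H ↔ ∃ e : Γ ≃g Δ, ∀ v, Nonempty (G v ≃* H (e v)) :=
  ⟨fun ⟨f, hf, hG⟩ => ⟨⟨f, (hf _ _).symm⟩, hG⟩,
    fun ⟨e, hG⟩ => ⟨e.toEquiv, fun _ _ => e.map_adj_iff.symm, hG⟩⟩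

theorem labIso_iff_t0_quotients_labIso_general
    {V W : Type} [Fintype V] [Fintype W]
    (Γ : SimpleGraph V) (Δ : SimpleGraph W)
    (G : V → Type) (H : W → Type) [∀ v, Group (G v)] [∀ w, Group (H w)]
    [∀ v, Nontrivial (G v)] [∀ w, Nontrivial (H w)]
    (hG : ∀ v, DICyclic (G v)) (hH : ∀ w, DICyclic (H w)) :
    IsLabIso Γ Δ G H ↔
      IsLabIso (T0Q Γ) (T0Q Δ) (classGroup Γ G) (classGroup Δ H) := by
  rw [isLabIso_iff_exists_iso, isLabIso_iff_exists_iso]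
  constructor
  · rintro ⟨e, he⟩
    refine ⟨e.t0Q, fun a => Equiv.nonempty_mulEquiv_piCongr
      (e.toEquiv.subtypeEquiv fun v => (e.t0Q.apply_eq_iff_eq (x := Quotient.mk _ v)).symm)
      fun v => he v.1⟩
  · rintro ⟨F, hF⟩
    choose φ hφ using fun a => exists_equiv_mulEquiv_of_pi_mulEquiv
      (G := fun v : {v // Quotient.mk (simSetoid Γ) v = a} => G v.1)
      (H := fun w : {w // Quotient.mk (simSetoid Δ) w = F a} => H w.1)
      (fun v => hG v.1) (fun w => hH w.1) (hF a).some
    let f := Equiv.ofFiberEquivOver F.toEquiv φ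
    have hf (v : V) : Quotient.mk _ (f v) = F (Quotient.mk _ v) := (φ _ ⟨v, rfl⟩).2
    exact ⟨F.ofT0Q f hf, fun v => hφ _ ⟨v, rfl⟩⟩

/-- Two labeled-graphs with directly-indecomposable cyclic vertex groups are
isomorphic iff their `T₀`-quotients are isomorphic. -/
theorem labIso_iff_t0_quotients_labIso
    {V W : Type} [Fintype V] [Nonempty V] [Fintype W] [Nonempty W]
    (Γ : SimpleGraph V) (Δ : SimpleGraph W)
    (G : V → Type) (H : W → Type) [∀ v, Group (G v)] [∀ w, Group (H w)]
    [∀ v, Nontrivial (G v)] [∀ w, Nontrivial (H w)]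
    (hG : ∀ v, DICyclic (G v)) (hH : ∀ w, DICyclic (H w)) :
    IsLabIso Γ Δ G H ↔
      IsLabIso (T0Q Γ) (T0Q Δ) (classGroup Γ G) (classGroup Δ H) :=
  labIso_iff_t0_quotients_labIso_general Γ Δ G H hG hH
end

section
/- Let (Γ, 𝒢_Γ) and (Σ, 𝒢_Σ) be labeled-graphs in which Γ and Σ are complete graphs and every vertex group is a primary cyclic group, with chosen generators x_u of G_u for u ∈ V_Γ. If τ : W(Γ, 𝒢_Γ) → W(Σ, 𝒢_Σ) is a group isomorphism, then there exists a labeled-graph isomorphism t : (Γ, 𝒢_Γ) → (Σ, 𝒢_Σ) such that for every u ∈ V_Γ, the vertex t(u) lies in the support supp(τ(x_u)). -/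
/-!
Over complete graphs both graph products are direct products, so `τ` becomes an isomorphism
`θ : ∏ G_v ≃* ∏ H_w`. Call `w` a partner of `u` when `|H_w| = |G_u|` and `θ(x_u)` has nontrivial
`w`-coordinate; Hall's condition for this relation is checked one order `p ^ n` at a time.
For a set `s` of vertices with `|G_u| = p ^ n`, the `p ^ |s|` elements
`∏_{u ∈ s} x_u ^ (p ^ (n - 1) k_u)` (`0 ≤ k_u < p`) are pairwise distinct modulo `p ^ n`-th
powers. After `θ`, their coordinates outside the set `N` of partners of `s` are `p ^ n`-th
powers, so they are told apart by their coordinates in `N`; these solve `h ^ p = 1`, which has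
at most `p` solutions in each cyclic `H_w`. Hence `p ^ |s| ≤ p ^ |N|`. Matchings in both
directions give a bijection, and the nontrivial coordinate of `θ(x_u)` at the partner of `u`
puts that vertex in the support of `τ(x_u)`.
-/

open Monoid

open scoped commutatorElement

namespace GP

theorem commute_of_adj {V : Type} {Γ : SimpleGraph V} {G : V → Type} [∀ v, Group (G v)]
    {u v : V} (h : Γ.Adj u v) (g : G u) (g' : G v) :
    Commute (GP.of Γ G u g) (GP.of Γ G v g') := by
  have hmk : ⁅GP.of Γ G u g, GP.of Γ G v g'⁆ =
      QuotientGroup.mk' (gpRel Γ G) ⁅CoprodI.of g, CoprodI.of g'⁆ := by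
    rw [map_commutatorElement]
    rfl
  rw [← commutatorElement_eq_one_iff_commute]
  exact hmk.trans ((QuotientGroup.eq_one_iff _).mpr
    (Subgroup.subset_normalClosure ⟨u, v, g, g', h, rfl⟩))

theorem pairwise_commute_of_complete {V : Type} {Γ : SimpleGraph V} {G : V → Type}
    [∀ v, Group (G v)] (hΓ : ∀ u v : V, u ≠ v → Γ.Adj u v) :
    Pairwise fun u v => ∀ (g : G u) (g' : G v), Commute (GP.of Γ G u g) (GP.of Γ G v g') :=
  fun u v huv => commute_of_adj (hΓ u v huv)

section ToPi

variable {V : Type} [DecidableEq V] (Γ : SimpleGraph V) (G : V → Type) [∀ v, Group (G v)]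

noncomputable def toPi : GP Γ G →* ∀ v, G v :=
  QuotientGroup.lift _ (CoprodI.lift fun v => MonoidHom.mulSingle G v) <|
    Subgroup.normalClosure_le_normal <| by
      rintro _ ⟨u, v, g, h, hadj, rfl⟩
      rw [SetLike.mem_coe, MonoidHom.mem_ker, map_commutatorElement, CoprodI.lift_of,
        CoprodI.lift_of, commutatorElement_eq_one_iff_commute]
      exact Pi.mulSingle_commute hadj.ne g h

theorem toPi_of (v : V) (g : G v) : toPi Γ G (GP.of Γ G v g) = Pi.mulSingle v g :=
  CoprodI.lift_of (fun v => MonoidHom.mulSingle G v) g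

theorem mem_supp_of_toPi_apply_ne_one {g : GP Γ G} {v : V} (h : toPi Γ G g v ≠ 1) :
    v ∈ supp Γ G g := by
  intro S hS
  by_contra hv
  have hle : WS Γ G S ≤ ((Pi.evalMonoidHom G v).comp (toPi Γ G)).ker :=
    iSup₂_le fun u hu => by
      rintro _ ⟨g, rfl⟩
      simp [toPi_of, Pi.mulSingle_eq_of_ne (ne_of_mem_of_not_mem hu hv).symm]
  exact h (hle hS)

end ToPi

section Complete

variable {V : Type} [Fintype V] [DecidableEq V] {Γ : SimpleGraph V} {G : V → Type}
  [∀ v, Group (G v)]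

noncomputable def ofPi (hΓ : ∀ u v : V, u ≠ v → Γ.Adj u v) : (∀ v, G v) →* GP Γ G :=
  MonoidHom.noncommPiCoprod (GP.of Γ G) (pairwise_commute_of_complete hΓ)

noncomputable def mulEquivPi (hΓ : ∀ u v : V, u ≠ v → Γ.Adj u v) :
    GP Γ G ≃* ∀ v, G v :=
  MonoidHom.toMulEquiv (toPi Γ G) (ofPi hΓ)
    (QuotientGroup.monoidHom_ext _ <| CoprodI.ext_hom _ _ fun v => MonoidHom.ext fun g => by
      change ofPi hΓ (toPi Γ G (GP.of Γ G v g)) = GP.of Γ G v g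
      rw [toPi_of, ofPi, MonoidHom.noncommPiCoprod_mulSingle])
    (MonoidHom.ext fun g => by
      change toPi Γ G (ofPi hΓ g) = g
      rw [ofPi, MonoidHom.noncommPiCoprod_apply, Finset.map_noncommProd]
      simp only [toPi_of]
      exact Finset.noncommProd_mulSingle g)

theorem mulEquivPi_apply (hΓ : ∀ u v : V, u ≠ v → Γ.Adj u v) (g : GP Γ G) :
    mulEquivPi hΓ g = toPi Γ G g :=
  rfl

theorem mulEquivPi_symm_mulSingle (hΓ : ∀ u v : V, u ≠ v → Γ.Adj u v) (v : V) (g : G v) :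
    (mulEquivPi hΓ).symm (Pi.mulSingle v g) = GP.of Γ G v g := by
  rw [MulEquiv.symm_apply_eq, mulEquivPi_apply, toPi_of]

end Complete

end GP

open Function

section CyclicPrimePower

variable {α : Type} [Group α] [IsCyclic α]

theorem exists_pow_prime_pow_eq_of_pow_eq_one {p m k : ℕ} (hp : p.Prime)
    (hcard : Nat.card α = p ^ m) (hkm : k ≤ m) {c : α} (hc : c ^ p ^ k = 1) :
    ∃ d : α, d ^ p ^ (m - k) = c := by
  have : Finite α := Nat.finite_of_card_ne_zero (hcard ▸ pow_ne_zero m hp.ne_zero)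
  obtain ⟨g, hg⟩ := IsCyclic.exists_generator (α := α)
  have hg_order : orderOf g = p ^ m := by rw [orderOf_eq_card_of_forall_mem_zpowers hg, hcard]
  obtain ⟨t, rfl⟩ : ∃ t : ℕ, g ^ t = c := mem_powers_iff_mem_zpowers.mpr (hg c)
  have hdvd : p ^ (m - k) * p ^ k ∣ t * p ^ k := by
    rw [← pow_add, Nat.sub_add_cancel hkm, ← hg_order, orderOf_dvd_iff_pow_eq_one, pow_mul, hc]
  obtain ⟨r, rfl⟩ := Nat.dvd_of_mul_dvd_mul_right (pow_pos hp.pos k) hdvd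
  exact ⟨g ^ r, by rw [← pow_mul, mul_comm]⟩

theorem exists_pow_prime_pow_eq_pow_pred {q m p n : ℕ} (hq : q.Prime) (hp : p.Prime)
    (hcard : Nat.card α = q ^ m) (hn : n ≠ 0) {c : α} (hc : c ^ p ^ n = 1)
    (hne : Nat.card α = p ^ n → c = 1) : ∃ e : α, e ^ p ^ n = c ^ p ^ (n - 1) := by
  have hdvd : orderOf c ∣ q ^ m := hcard ▸ orderOf_dvd_natCard c
  obtain rfl | hqp := eq_or_ne q p
  · rcases lt_trichotomy m n with hmn | rfl | hmn
    · refine ⟨1, ?_⟩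
      rw [one_pow, orderOf_dvd_iff_pow_eq_one.mp (hdvd.trans (pow_dvd_pow q (by omega)))]
    · exact ⟨1, by rw [hne hcard, one_pow, one_pow]⟩
    · obtain ⟨d, rfl⟩ := exists_pow_prime_pow_eq_of_pow_eq_one hq hcard hmn.le hc
      refine ⟨d ^ q ^ (m - 1 - n), ?_⟩
      rw [← pow_mul, ← pow_mul, ← pow_add, ← pow_add]
      congr 2
      omega
  · have hco : (q ^ m).Coprime (p ^ n) := .pow _ _ ((Nat.coprime_primes hq hp).mpr hqp)
    have hc1 : c = 1 :=
      orderOf_eq_one_iff.mp (Nat.eq_one_of_dvd_coprimes hco hdvd (orderOf_dvd_of_pow_eq_one hc))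
    exact ⟨1, by rw [hc1, one_pow, one_pow]⟩

end CyclicPrimePower

theorem orderOf_pow_prime_pow_pred {M : Type} [Monoid M] {y : M} {p n : ℕ} (hp : p.Prime)
    (hn : n ≠ 0) (hy : orderOf y = p ^ n) : orderOf (y ^ p ^ (n - 1)) = p := by
  rw [orderOf_pow_of_dvd (pow_ne_zero _ hp.ne_zero) (hy ▸ pow_dvd_pow p (n.sub_le 1)), hy,
    Nat.pow_div (n.sub_le 1) hp.pos, Nat.sub_sub_self (by omega), pow_one]

theorem Pi.mem_range_powMonoidHom_iff {ι : Type} {A : ι → Type} [∀ i, CommGroup (A i)]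
    {n : ℕ} {g : ∀ i, A i} :
    g ∈ (powMonoidHom n : (∀ i, A i) →* ∀ i, A i).range ↔
      ∀ i, g i ∈ (powMonoidHom n : A i →* A i).range := by
  refine ⟨fun ⟨e, he⟩ i => ⟨e i, congrFun he i⟩, fun h => ?_⟩
  choose e he using h
  exact ⟨e, funext he⟩

theorem Finset.card_le_card_biUnion_of_fiberwise {ι α κ : Type} [DecidableEq α]
    [DecidableEq κ] (t : ι → Finset α) (c : ι → κ) (c' : α → κ)
    (ht : ∀ i, ∀ a ∈ t i, c' a = c i)
    (h : ∀ (s : Finset ι) (k : κ), (∀ i ∈ s, c i = k) → s.card ≤ (s.biUnion t).card)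
    (s : Finset ι) : s.card ≤ (s.biUnion t).card := by
  have hmaps : Set.MapsTo c' (s.biUnion t : Set α) (s.image c) := fun a ha => by
    obtain ⟨i, hi, ha⟩ := Finset.mem_biUnion.mp ha
    exact Finset.mem_image.mpr ⟨i, hi, (ht i a ha).symm⟩
  calc s.card = ∑ k ∈ s.image c, {i ∈ s | c i = k}.card := Finset.card_eq_sum_card_image c s
    _ ≤ ∑ k ∈ s.image c, ({i ∈ s | c i = k}.biUnion t).card :=
      Finset.sum_le_sum fun k _ => h _ k fun i hi => (Finset.mem_filter.mp hi).2
    _ ≤ ∑ k ∈ s.image c, {a ∈ s.biUnion t | c' a = k}.card := by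
      refine Finset.sum_le_sum fun k _ => Finset.card_le_card fun a ha => ?_
      obtain ⟨i, hik, hai⟩ := Finset.mem_biUnion.mp ha
      obtain ⟨hi, rfl⟩ := Finset.mem_filter.mp hik
      exact Finset.mem_filter.mpr ⟨Finset.mem_biUnion.mpr ⟨i, hi, hai⟩, ht i a hai⟩
    _ = (s.biUnion t).card := (Finset.card_eq_sum_card_fiberwise hmaps).symm

section ProdPowOn

variable {V : Type} [DecidableEq V] {G : V → Type} [∀ v, CommGroup (G v)] {p : ℕ}
  (s : Finset V) (y : ∀ v, G v)

def prodPowOn (k : s → Fin p) : ∀ v, G v :=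
  fun v => if hv : v ∈ s then y v ^ (k ⟨v, hv⟩ : ℕ) else 1

variable {s y}

theorem prodPowOn_pow_eq_one (hy : ∀ u ∈ s, orderOf (y u) = p) (k : s → Fin p) :
    prodPowOn s y k ^ p = 1 := by
  funext v
  by_cases hv : v ∈ s
  · have hyp := pow_orderOf_eq_one (y v)
    rw [hy v hv] at hyp
    rw [Pi.pow_apply, prodPowOn, dif_pos hv, pow_right_comm, hyp, one_pow, Pi.one_apply]
  · rw [Pi.pow_apply, prodPowOn, dif_neg hv, one_pow, Pi.one_apply]

theorem eq_of_prodPowOn_mul_inv_mem_range {m : ℕ} (hy : ∀ u ∈ s, orderOf (y u) = p)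
    (hcard : ∀ u ∈ s, Nat.card (G u) ∣ m) {k k' : s → Fin p}
    (h : prodPowOn s y k * (prodPowOn s y k')⁻¹ ∈ (powMonoidHom m).range) : k = k' := by
  funext ⟨u, hu⟩
  obtain ⟨e, he⟩ := Pi.mem_range_powMonoidHom_iff.mp h u
  rw [powMonoidHom_apply, orderOf_dvd_iff_pow_eq_one.mp ((orderOf_dvd_natCard e).trans
    (hcard u hu)), eq_comm, Pi.mul_apply, Pi.inv_apply, mul_inv_eq_one] at he
  simp only [prodPowOn, dif_pos hu] at he
  exact Fin.ext (pow_injOn_Iio_orderOf (by simp [hy u hu]) (by simp [hy u hu]) he)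

theorem map_prodPowOn_mem [Fintype V] {M : Type} [CommGroup M] (φ : (∀ v, G v) →* M)
    {K : Subgroup M} (h : ∀ u ∈ s, φ (Pi.mulSingle u (y u)) ∈ K) (k : s → Fin p) :
    φ (prodPowOn s y k) ∈ K := by
  rw [← Finset.univ_prod_mulSingle (prodPowOn s y k), map_prod]
  refine Subgroup.prod_mem _ fun v _ => ?_
  by_cases hv : v ∈ s
  · rw [prodPowOn, dif_pos hv, Pi.mulSingle_pow, map_pow]
    exact Subgroup.pow_mem _ (h v hv) _
  · rw [prodPowOn, dif_neg hv, Pi.mulSingle_one, map_one]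
    exact Subgroup.one_mem _

end ProdPowOn

section Matching

variable {V W : Type} [Fintype W] [DecidableEq V]
  {G : V → Type} {H : W → Type} [∀ v, CommGroup (G v)] [∀ w, CommGroup (H w)]

open Classical in
noncomputable def partners (θ : (∀ v, G v) ≃* (∀ w, H w)) (x : ∀ v, G v) (u : V) :
    Finset W :=
  {w | Nat.card (H w) = Nat.card (G u) ∧ θ (Pi.mulSingle u (x u)) w ≠ 1}

theorem mem_partners {θ : (∀ v, G v) ≃* (∀ w, H w)} {x : ∀ v, G v} {u : V} {w : W} :
    w ∈ partners θ x u ↔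
      Nat.card (H w) = Nat.card (G u) ∧ θ (Pi.mulSingle u (x u)) w ≠ 1 := by
  simp [partners]

theorem map_mulSingle_pow_pred_mem_range_of_notMem_partners {p n q m : ℕ} (hp : p.Prime)
    (hn : n ≠ 0) (θ : (∀ v, G v) ≃* (∀ w, H w)) (x : ∀ v, G v) {u : V} {w : W}
    (hGu : Nat.card (G u) = p ^ n) [IsCyclic (H w)] (hq : q.Prime)
    (hHw : Nat.card (H w) = q ^ m) (hw : w ∉ partners θ x u) :
    θ (Pi.mulSingle u (x u ^ p ^ (n - 1))) w ∈ (powMonoidHom (p ^ n) : H w →* H w).range := by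
  have hc : θ (Pi.mulSingle u (x u)) w ^ p ^ n = 1 := by
    rw [← Pi.pow_apply, ← map_pow, ← Pi.mulSingle_pow, ← hGu, pow_card_eq_one',
      Pi.mulSingle_one, map_one, Pi.one_apply]
  have hne : Nat.card (H w) = p ^ n → θ (Pi.mulSingle u (x u)) w = 1 := fun h => by
    by_contra h1
    exact hw (mem_partners.mpr ⟨h.trans hGu.symm, h1⟩)
  rw [Pi.mulSingle_pow, map_pow, Pi.pow_apply]
  exact exists_pow_prime_pow_eq_pow_pred hq hp hHw hn hc hne

theorem card_le_card_biUnion_partners [Fintype V] [DecidableEq W] {p n : ℕ} (hp : p.Prime)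
    (hn : n ≠ 0)
    (hH : ∀ w, IsCyclic (H w) ∧ ∃ q m : ℕ, q.Prime ∧ Nat.card (H w) = q ^ m)
    (θ : (∀ v, G v) ≃* (∀ w, H w)) (x : ∀ v, G v) (s : Finset V)
    (hs : ∀ u ∈ s, orderOf (x u) = p ^ n ∧ Nat.card (G u) = p ^ n) :
    s.card ≤ (s.biUnion (partners θ x)).card := by
  set N := s.biUnion (partners θ x)
  have : ∀ w, IsCyclic (H w) := fun w => (hH w).1
  have : ∀ w, Finite (H w) := fun w => by
    obtain ⟨-, q, m, hq, hcard⟩ := hH w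
    exact Nat.finite_of_card_ne_zero (hcard ▸ pow_ne_zero m hq.ne_zero)
  set y : ∀ v, G v := fun v => x v ^ p ^ (n - 1)
  have hy : ∀ u ∈ s, orderOf (y u) = p := fun u hu =>
    orderOf_pow_prime_pow_pred hp hn (hs u hu).1
  have hfar : ∀ k : s → Fin p, ∀ w ∉ N,
      θ (prodPowOn s y k) w ∈ (powMonoidHom (p ^ n)).range :=
    fun k w hw => map_prodPowOn_mem ((Pi.evalMonoidHom H w).comp θ.toMonoidHom)
      (fun u hu => by
        obtain ⟨-, q, m, hq, hcard⟩ := hH w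
        exact map_mulSingle_pow_pred_mem_range_of_notMem_partners hp hn θ x (hs u hu).2 hq hcard
          fun h => hw (Finset.mem_biUnion.mpr ⟨u, hu, h⟩)) k
  have htors : ∀ k w, θ (prodPowOn s y k) w ^ p = 1 := fun k w => by
    rw [← Pi.pow_apply, ← map_pow, prodPowOn_pow_eq_one hy, map_one, Pi.one_apply]
  let F : (s → Fin p) → ∀ w : N, (powMonoidHom p : H w →* H w).ker :=
    fun k w => ⟨θ (prodPowOn s y k) w, htors k w⟩
  have hF : Injective F := fun k k' hkk' => by
    refine eq_of_prodPowOn_mul_inv_mem_range hy (fun u hu => (hs u hu).2.dvd) ?_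
    rw [← MulEquiv.map_range_powMonoidHom θ.symm, ← θ.symm_apply_apply (_ * _)]
    refine Subgroup.mem_map_of_mem _ (Pi.mem_range_powMonoidHom_iff.mpr fun w => ?_)
    rw [map_mul, map_inv, Pi.mul_apply, Pi.inv_apply]
    by_cases hw : w ∈ N
    · have hw_eq : θ (prodPowOn s y k) w = θ (prodPowOn s y k') w :=
        congrArg Subtype.val (congrFun hkk' ⟨w, hw⟩)
      rw [hw_eq, mul_inv_cancel]
      exact Subgroup.one_mem _
    · exact Subgroup.mul_mem _ (hfar k w hw) (Subgroup.inv_mem _ (hfar k' w hw))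
  have hcard_ker : ∀ w : N, Nat.card (powMonoidHom p : H w →* H w).ker ≤ p := fun w => by
    rw [IsCyclic.card_powMonoidHom_ker]
    exact Nat.le_of_dvd hp.pos (Nat.gcd_dvd_right _ _)
  refine (pow_le_pow_iff_right₀ hp.one_lt).mp ?_
  calc p ^ s.card = Nat.card (s → Fin p) := by simp
    _ ≤ Nat.card (∀ w : N, (powMonoidHom p : H w →* H w).ker) :=
      Nat.card_le_card_of_injective F hF
    _ ≤ p ^ N.card := by
      rw [Nat.card_pi]
      simpa using Finset.prod_le_pow_card Finset.univ _ p fun w _ => hcard_ker w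

theorem exists_injective_mem_partners [Fintype V] [DecidableEq W] [∀ v, Nontrivial (G v)]
    (hG : ∀ v, ∃ p n : ℕ, p.Prime ∧ Nat.card (G v) = p ^ n)
    (hH : ∀ w, IsCyclic (H w) ∧ ∃ q m : ℕ, q.Prime ∧ Nat.card (H w) = q ^ m)
    (θ : (∀ v, G v) ≃* (∀ w, H w)) (x : ∀ v, G v)
    (hx : ∀ v, orderOf (x v) = Nat.card (G v)) :
    ∃ f : V → W, Injective f ∧ ∀ u, f u ∈ partners θ x u := by
  refine (Finset.all_card_le_biUnion_card_iff_exists_injective _).mp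
    (Finset.card_le_card_biUnion_of_fiberwise _ (fun v => Nat.card (G v))
      (fun w => Nat.card (H w)) (fun u w hw => (mem_partners.mp hw).1) fun s k hs => ?_)
  obtain rfl | ⟨u, hu⟩ := s.eq_empty_or_nonempty
  · simp
  obtain ⟨p, n, hp, hcard⟩ := hG u
  have hn : n ≠ 0 := by
    rintro rfl
    exact not_subsingleton (G u) (Nat.card_eq_one_iff_unique.mp hcard).1
  refine card_le_card_biUnion_partners hp hn hH θ x s fun v hv => ?_
  have hcard_v : Nat.card (G v) = p ^ n := (hs v hv).trans ((hs u hu).symm.trans hcard)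
  exact ⟨(hx v).trans hcard_v, hcard_v⟩

end Matching

theorem precise_rigidity_complete_graphs_primary_cyclic_general
    {V W : Type} [Fintype V] [Fintype W]
    (Γ : SimpleGraph V) (Δ : SimpleGraph W)
    (hΓ : ∀ u v : V, u ≠ v → Γ.Adj u v) (hΔ : ∀ u v : W, u ≠ v → Δ.Adj u v)
    (G : V → Type) (H : W → Type) [∀ v, Group (G v)] [∀ w, Group (H w)]
    [∀ v, Nontrivial (G v)] [∀ w, Nontrivial (H w)]
    (hG : ∀ v, ∃ p n : ℕ, p.Prime ∧ Nat.card (G v) = p ^ n)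
    (x : ∀ v, G v) (hx : ∀ v, Subgroup.zpowers (x v) = ⊤)
    (hH : ∀ w, IsCyclic (H w) ∧ ∃ p n : ℕ, p.Prime ∧ Nat.card (H w) = p ^ n)
    (τ : GP Γ G ≃* GP Δ H) :
    ∃ f : V ≃ W, (∀ u v : V, Γ.Adj u v ↔ Δ.Adj (f u) (f v)) ∧
      (∀ u : V, Nonempty (G u ≃* H (f u))) ∧
      ∀ u : V, f u ∈ supp Δ H (τ (GP.of Γ G u (x u))) := by
  classical
  have hGcyc : ∀ v, IsCyclic (G v) := fun v =>
    isCyclic_iff_exists_zpowers_eq_top.mpr ⟨x v, hx v⟩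
  have hHcyc : ∀ w, IsCyclic (H w) := fun w => (hH w).1
  let : ∀ v, CommGroup (G v) := fun v => IsCyclic.commGroup
  let : ∀ w, CommGroup (H w) := fun w => IsCyclic.commGroup
  let θ := ((GP.mulEquivPi hΓ).symm.trans τ).trans (GP.mulEquivPi hΔ)
  obtain ⟨f, hf_inj, hf⟩ := exists_injective_mem_partners hG hH θ x fun v =>
    orderOf_eq_card_of_zpowers_eq_top (hx v)
  choose y hy using fun w => (hHcyc w).exists_ofOrder_eq_natCard
  obtain ⟨g, hg_inj, -⟩ := exists_injective_mem_partners (fun w => (hH w).2)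
    (fun v => ⟨hGcyc v, hG v⟩) θ.symm y hy
  have hcard : Fintype.card V = Fintype.card W :=
    (Fintype.card_le_of_injective f hf_inj).antisymm (Fintype.card_le_of_injective g hg_inj)
  let e : V ≃ W :=
    .ofBijective f ((Fintype.bijective_iff_injective_and_card f).mpr ⟨hf_inj, hcard⟩)
  refine ⟨e, fun u v => ⟨fun h => hΔ _ _ (e.injective.ne h.ne),
    fun h => hΓ _ _ (ne_of_apply_ne e h.ne)⟩,
    fun u => ⟨mulEquivOfCyclicCardEq (mem_partners.mp (hf u)).1.symm⟩, fun u => ?_⟩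
  apply GP.mem_supp_of_toPi_apply_ne_one
  rw [← GP.mulEquivPi_apply hΔ, ← GP.mulEquivPi_symm_mulSingle hΓ]
  exact (mem_partners.mp (hf u)).2

/-- Rigidity for finite abelian groups decomposed as direct products of primary
cyclic groups: for complete graphs with primary cyclic vertex groups, every
group isomorphism yields a labeled-graph isomorphism `t` with
`t(u) ∈ supp(τ(x_u))` for every vertex `u`. -/
theorem precise_rigidity_complete_graphs_primary_cyclic
    {V W : Type} [Fintype V] [Nonempty V] [Fintype W] [Nonempty W]
    (Γ : SimpleGraph V) (Δ : SimpleGraph W)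
    (hΓ : ∀ u v : V, u ≠ v → Γ.Adj u v) (hΔ : ∀ u v : W, u ≠ v → Δ.Adj u v)
    (G : V → Type) (H : W → Type) [∀ v, Group (G v)] [∀ w, Group (H w)]
    [∀ v, Nontrivial (G v)] [∀ w, Nontrivial (H w)]
    (hG : ∀ v, ∃ p n : ℕ, p.Prime ∧ Nat.card (G v) = p ^ n)
    (x : ∀ v, G v) (hx : ∀ v, Subgroup.zpowers (x v) = ⊤)
    (hH : ∀ w, IsCyclic (H w) ∧ ∃ p n : ℕ, p.Prime ∧ Nat.card (H w) = p ^ n)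
    (τ : GP Γ G ≃* GP Δ H) :
    ∃ f : V ≃ W, (∀ u v : V, Γ.Adj u v ↔ Δ.Adj (f u) (f v)) ∧
      (∀ u : V, Nonempty (G u ≃* H (f u))) ∧
      ∀ u : V, f u ∈ supp Δ H (τ (GP.of Γ G u (x u))) :=
  precise_rigidity_complete_graphs_primary_cyclic_general Γ Δ hΓ hΔ G H hG x hx hH τ
end
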